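/- arXiv:1506.07022 — 2 statements merged into one kernel-verified Lean document; each statement's English description precedes it below -/
import Mathlib

section
/- Let λ and μ be partitions of n with ℓ(μ) = l, λ dominating μ, λ_1 > λ_2 = ... = λ_l, and λ_1 - λ_2 = 1. Then μ = λ. -/
/-- A partition encoded as a weakly decreasing, finitely supported function `ℕ → ℕ`
(0-indexed: `l 0` is the first part). -/
def IsPartition (l : ℕ → ℕ) : Prop :=
  Antitone l ∧ ∃ N, ∀ i, N ≤ i → l i = 0

/-- The size (sum of the parts). -/
noncomputable def psize (l : ℕ → ℕ) : ℕ := ∑ᶠ i, l i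

/-- Dominance order: every partial sum of `l` is at least that of `m`. -/
def Dominates (l m : ℕ → ℕ) : Prop :=
  ∀ k, ∑ i ∈ Finset.range k, m i ≤ ∑ i ∈ Finset.range k, l i

/-- `l` has exactly `h` (nonzero) parts. -/
def PartLength (l : ℕ → ℕ) (h : ℕ) : Prop :=
  (∀ i, i < h → 0 < l i) ∧ ∀ i, h ≤ i → l i = 0

/-- A semistandard Young tableau of shape `l`: positive entries in the cells
`(i, j)` with `j < l i`, zero outside, rows weakly increasing, columns strictly
increasing. -/
def IsSSYT (l : ℕ → ℕ) (T : ℕ → ℕ → ℕ) : Prop :=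
  (∀ i j, j < l i → 1 ≤ T i j) ∧
  (∀ i j, l i ≤ j → T i j = 0) ∧
  (∀ i j k, j ≤ k → k < l i → T i j ≤ T i k) ∧
  (∀ i i' j, i < i' → j < l i' → T i j < T i' j)

/-- The number of cells of `T` (inside shape `l`) with entry `m + 1`. -/
noncomputable def entryCount (l : ℕ → ℕ) (T : ℕ → ℕ → ℕ) (m : ℕ) : ℕ :=
  Set.ncard {p : ℕ × ℕ | p.2 < l p.1 ∧ T p.1 p.2 = m + 1}

/-- `T` has weight `w`: the entry `m + 1` occurs `w m` times. -/
def HasWeight (l : ℕ → ℕ) (T : ℕ → ℕ → ℕ) (w : ℕ → ℕ) : Prop :=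
  ∀ m, entryCount l T m = w m

/-- The Kostka number: the number of semistandard Young tableaux of shape `l`
and weight `w`. -/
noncomputable def kostka (l w : ℕ → ℕ) : ℕ :=
  Set.ncard {T : ℕ → ℕ → ℕ | IsSSYT l T ∧ HasWeight l T w}

/-! The shape `(c + 1, c, …, c)` with `l` rows is the most balanced partition of `l * c + 1`
into at most `l` parts, hence the least one in dominance order: since `μ` is weakly decreasing,
its first `k` parts have average at least that of all `l` parts, so they sum to more than
`k * c`. Thus `μ` dominates `λ` as well, and dominance is antisymmetric. -/

open Finset

lemma psize_eq_sum_range {f : ℕ → ℕ} {N : ℕ} (hN : ∀ i, N ≤ i → f i = 0) :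
    psize f = ∑ i ∈ range N, f i := by
  refine finsum_eq_sum_of_support_subset f fun i hi => ?_
  simp only [coe_range, Set.mem_Iio]
  by_contra! h
  exact hi (hN i h)

lemma sum_range_le_psize {f : ℕ → ℕ} {N : ℕ} (hN : ∀ i, N ≤ i → f i = 0) (k : ℕ) :
    ∑ i ∈ range k, f i ≤ psize f := by
  rw [psize_eq_sum_range fun i hi => hN i (le_of_max_le_right hi)]
  exact sum_le_sum_of_subset (range_subset_range.2 (le_max_left k N))

lemma Dominates.antisymm {f g : ℕ → ℕ} (hfg : Dominates f g) (hgf : Dominates g f) : f = g := by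
  funext i
  have hsucc := le_antisymm (hgf (i + 1)) (hfg (i + 1))
  rw [sum_range_succ, sum_range_succ, le_antisymm (hgf i) (hfg i)] at hsucc
  omega

lemma Antitone.mul_sum_range_le {f : ℕ → ℕ} (hf : Antitone f) {k l : ℕ} (hkl : k ≤ l) :
    k * ∑ i ∈ range l, f i ≤ l * ∑ i ∈ range k, f i := by
  induction l, hkl using Nat.le_induction with
  | base => rfl
  | succ l hkl ih =>
    have hlast : k * f l ≤ ∑ i ∈ range k, f i := by
      simpa using card_nsmul_le_sum (range k) f (f l) fun i hi => hf (by grind)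
    rw [sum_range_succ]
    nlinarith

lemma sum_range_eq_mul_add_one {lam : ℕ → ℕ} {c l : ℕ} (h0 : lam 0 = c + 1)
    (hc : ∀ i, 1 ≤ i → i < l → lam i = c) {k : ℕ} (hk : 1 ≤ k) (hkl : k ≤ l) :
    ∑ i ∈ range k, lam i = k * c + 1 := by
  induction k, hk using Nat.le_induction with
  | base => simp [h0]
  | succ k hk ih =>
    rw [sum_range_succ, ih (by omega), hc k hk (by omega)]
    ring

lemma Antitone.mul_add_one_le_sum_range {f : ℕ → ℕ} (hf : Antitone f) {c k l : ℕ} (hk : 1 ≤ k)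
    (hkl : k ≤ l) (hsum : l * c + 1 ≤ ∑ i ∈ range l, f i) :
    k * c + 1 ≤ ∑ i ∈ range k, f i := by
  have havg := hf.mul_sum_range_le hkl
  by_contra! h
  nlinarith

theorem stmt5_general (n l : ℕ) (lam mu : ℕ → ℕ)
    (hlp : IsPartition lam) (hln : psize lam = n)
    (hmp : IsPartition mu) (hmn : psize mu = n)
    (hml : PartLength mu l)
    (hd : Dominates lam mu)
    (h2 : ∀ i, 1 ≤ i → i < l → lam i = lam 1)
    (hdiff : lam 0 = lam 1 + 1) :
    mu = lam := by
  obtain ⟨-, N, hN⟩ := hlp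
  have hsize : psize lam = psize mu := hln.trans hmn.symm
  refine (hd.antisymm fun k => ?_).symm
  rcases le_or_gt l k with hlk | hkl
  · calc ∑ i ∈ range k, lam i ≤ psize lam := sum_range_le_psize hN k
      _ = psize mu := hsize
      _ = ∑ i ∈ range k, mu i := psize_eq_sum_range fun i hi => hml.2 i (hlk.trans hi)
  rcases Nat.eq_zero_or_pos k with rfl | hk
  · simp
  have hl : 1 ≤ l := by omega
  rw [sum_range_eq_mul_add_one hdiff h2 hk hkl.le]
  refine hmp.1.mul_add_one_le_sum_range hk hkl.le ?_
  calc l * lam 1 + 1 = ∑ i ∈ range l, lam i := (sum_range_eq_mul_add_one hdiff h2 hl le_rfl).symm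
    _ ≤ psize lam := sum_range_le_psize hN l
    _ = psize mu := hsize
    _ = ∑ i ∈ range l, mu i := psize_eq_sum_range hml.2

theorem stmt5 (n l : ℕ) (lam mu : ℕ → ℕ)
    (hlp : IsPartition lam) (hln : psize lam = n)
    (hmp : IsPartition mu) (hmn : psize mu = n)
    (hml : PartLength mu l)
    (hd : Dominates lam mu)
    (h1 : lam 1 < lam 0)
    (h2 : ∀ i, 1 ≤ i → i < l → lam i = lam 1)
    (hdiff : lam 0 = lam 1 + 1) :
    mu = lam :=
  stmt5_general n l lam mu hlp hln hmp hmn hml hd h2 hdiff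
end

section
/- Let λ and μ be partitions of n with K_{λμ} = 1 and ℓ(λ) = h ≤ ℓ(μ). Then the unique semistandard Young tableau T of shape λ and weight μ has the property that the first entry in each row i of T equals i, for i = 1, ..., h. -/
/-! By induction on the row `r`: suppose rows `0, …, r - 1` start with `1, …, r` but row `r`
starts with `u + 2 > r + 1`. Then every entry `u + 1` lies strictly above row `r` and off the
first column. If some `u + 1` has no `u + 2` directly below it, the rightmost such one can be
exchanged with the `u + 2` starting row `r`, giving a second tableau of the same shape and weight,
against `K_{λμ} = 1`. Otherwise moving every `u + 1` one row down injects them into the `u + 2`s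
while missing the first cell of row `r`, so `μ u < μ (u + 1)`, against `μ` being a partition. -/

theorem IsPartition.finite_cells {lam : ℕ → ℕ} (hlam : IsPartition lam) :
    {p : ℕ × ℕ | p.2 < lam p.1}.Finite := by
  obtain ⟨N, hN⟩ := hlam.2
  refine ((Set.finite_Iio N).prod (Set.finite_Iio (lam 0))).subset fun ⟨a, b⟩ hab => ?_
  simp only [Set.mem_ofPred_eq] at hab
  refine ⟨?_, hab.trans_le (hlam.1 (Nat.zero_le a))⟩
  by_contra ha
  simp [hN a (not_lt.1 ha)] at hab

theorem eq_of_kostka_eq_one {lam mu : ℕ → ℕ} {T T' : ℕ → ℕ → ℕ} (hk : kostka lam mu = 1)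
    (hT : IsSSYT lam T) (hW : HasWeight lam T mu) (hT' : IsSSYT lam T')
    (hW' : HasWeight lam T' mu) : T' = T := by
  obtain ⟨T₀, hT₀⟩ := Set.ncard_eq_one.1 hk
  have h : T ∈ ({T₀} : Set _) := hT₀ ▸ ⟨hT, hW⟩
  have h' : T' ∈ ({T₀} : Set _) := hT₀ ▸ ⟨hT', hW'⟩
  exact h'.trans h.symm

def setCell (T : ℕ → ℕ → ℕ) (i j v : ℕ) : ℕ → ℕ → ℕ :=
  Function.update T i (Function.update (T i) j v)

theorem setCell_apply (T : ℕ → ℕ → ℕ) (i j v a b : ℕ) :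
    setCell T i j v a b = if a = i ∧ b = j then v else T a b := by
  by_cases ha : a = i
  · subst ha; by_cases hb : b = j <;> simp [setCell, hb]
  · simp [setCell, ha]

theorem setCell_setCell_eq_swap (T : ℕ → ℕ → ℕ) (i j r c a b : ℕ) :
    setCell (setCell T r c (T i j)) i j (T r c) a b =
      Function.uncurry T (Equiv.swap (i, j) (r, c) (a, b)) := by
  simp only [setCell_apply, Equiv.swap_apply_def, Prod.mk.injEq]
  split_ifs <;> grind

theorem HasWeight.setCell_swap {lam w : ℕ → ℕ} {T : ℕ → ℕ → ℕ} (hW : HasWeight lam T w)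
    {i j r c : ℕ} (hj : j < lam i) (hc : c < lam r) :
    HasWeight lam (setCell (setCell T r c (T i j)) i j (T r c)) w := by
  intro m
  let σ := Equiv.swap (i, j) (r, c)
  have hshape : ∀ p : ℕ × ℕ, (σ p).2 < lam (σ p).1 ↔ p.2 < lam p.1 := by
    intro p
    simp only [σ, Equiv.swap_apply_def]
    split_ifs <;> grind
  have hset : {p : ℕ × ℕ | p.2 < lam p.1 ∧
      setCell (setCell T r c (T i j)) i j (T r c) p.1 p.2 = m + 1} =
        σ '' {p : ℕ × ℕ | p.2 < lam p.1 ∧ T p.1 p.2 = m + 1} := by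
    rw [Equiv.image_eq_preimage_symm, Equiv.symm_swap]
    ext p
    exact and_congr (hshape p).symm (by rw [setCell_setCell_eq_swap]; rfl)
  rw [← hW m, entryCount, hset, Set.ncard_image_of_injective _ σ.injective, entryCount]

namespace IsSSYT

variable {lam : ℕ → ℕ} {T : ℕ → ℕ → ℕ}

theorem add_one_le (hlam : Antitone lam) (hT : IsSSYT lam T) {i j : ℕ} (hj : j < lam i) :
    i + 1 ≤ T i j := by
  induction i with
  | zero => exact hT.1 0 j hj
  | succ i ih =>
    have := hT.2.2.2 i (i + 1) j i.lt_succ_self hj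
    have := ih (hj.trans_le (hlam i.le_succ))
    omega

theorem lt_of_lt_first (hT : IsSSYT lam T) {a b r : ℕ} (hb : b < lam a) (hlt : T a b < T r 0) :
    a < r := by
  by_contra! hra
  have := hT.2.2.1 a 0 b b.zero_le hb
  rcases hra.eq_or_lt with rfl | hra
  · omega
  · have := hT.2.2.2 r a 0 hra (b.zero_le.trans_lt hb)
    omega

theorem setCell_of_bounds (hT : IsSSYT lam T) {i j v : ℕ} (hj : j < lam i) (hv : 1 ≤ v)
    (hleft : ∀ b < j, T i b ≤ v) (hright : ∀ c, j < c → c < lam i → v ≤ T i c)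
    (hup : ∀ a < i, T a j < v) (hdown : ∀ a, i < a → j < lam a → v < T a j) :
    IsSSYT lam (setCell T i j v) := by
  obtain ⟨hpos, hzero, hrow, hcol⟩ := hT
  refine ⟨fun a b hb => ?_, fun a b hb => ?_, fun a b c hbc hc => ?_, fun a a' b ha hb => ?_⟩
  all_goals simp only [setCell_apply]
  · split_ifs <;> grind
  · split_ifs <;> grind
  · split_ifs <;> grind
  · split_ifs <;> grind

theorem exists_raisable (hlam : Antitone lam) (hfin : {p : ℕ × ℕ | p.2 < lam p.1}.Finite)
    (hT : IsSSYT lam T) {v : ℕ}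
    (hfree : ∃ a b, b < lam a ∧ T a b = v ∧ ¬(b < lam (a + 1) ∧ T (a + 1) b = v + 1)) :
    ∃ i j, j < lam i ∧ T i j = v ∧ (∀ c, j < c → c < lam i → v + 1 ≤ T i c) ∧
      ∀ a, i < a → j < lam a → v + 1 < T a j := by
  let F := {p : ℕ × ℕ | p.2 < lam p.1 ∧ T p.1 p.2 = v ∧
    ¬(p.2 < lam (p.1 + 1) ∧ T (p.1 + 1) p.2 = v + 1)}
  obtain ⟨a, b, hab⟩ := hfree
  obtain ⟨⟨i, j⟩, ⟨hj, hij, hstuck⟩, hmax⟩ :=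
    (hfin.subset fun p hp => hp.1 : F.Finite).exists_maximalFor Prod.snd F ⟨(a, b), hab⟩
  dsimp only at hj hij hstuck
  obtain ⟨-, -, hrow, hcol⟩ := hT
  have hdown : v + 1 < T (i + 1) j ∨ lam (i + 1) ≤ j := by
    by_contra! h
    have := hcol i (i + 1) j i.lt_succ_self h.2
    exact hstuck ⟨h.2, by omega⟩
  refine ⟨i, j, hj, hij, fun c hjc hc => ?_, fun a hia ha => ?_⟩
  · have hnext : T i (j + 1) ≠ v := by
      intro hnext
      have hstuck' : ¬(j + 1 < lam (i + 1) ∧ T (i + 1) (j + 1) = v + 1) := fun ⟨hl, hv⟩ => by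
        have := hrow (i + 1) j (j + 1) j.le_succ hl
        have := hcol i (i + 1) j i.lt_succ_self (by omega)
        exact hstuck ⟨by omega, by omega⟩
      have := hmax (show (i, j + 1) ∈ F from ⟨(by omega : j + 1 < lam i), hnext, hstuck'⟩)
      simp at this
    have := hrow i j (j + 1) j.le_succ (by omega)
    have := hrow i (j + 1) c hjc hc
    omega
  · have hj' : j < lam (i + 1) := ha.trans_le (hlam hia)
    rcases (show i + 1 ≤ a from hia).eq_or_lt with rfl | hia
    · omega
    · have := hcol (i + 1) a j hia ha
      omega

theorem setCell_exchange (hT : IsSSYT lam T) {i j r v : ℕ} (hr : 0 < lam r)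
    (hrv : T r 0 = v + 1) (hj : j < lam i) (hij : T i j = v)
    (hir : i < r) (hj0 : j ≠ 0) (hright : ∀ c, j < c → c < lam i → v + 1 ≤ T i c)
    (hbelow : ∀ a, i < a → j < lam a → v + 1 < T a j) (habove : ∀ a < r, T a 0 < v) :
    IsSSYT lam (setCell (setCell T r 0 v) i j (v + 1)) := by
  have hT₁ : IsSSYT lam (setCell T r 0 v) := by
    refine hT.setCell_of_bounds hr (by have := hT.1 i j hj; omega)
      (fun b hb => absurd hb b.not_lt_zero) (fun c _ hc => ?_) habove (fun a ha h0 => ?_)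
    · have := hT.2.2.1 r 0 c c.zero_le hc
      omega
    · have := hT.2.2.2 r a 0 ha h0
      omega
  refine hT₁.setCell_of_bounds hj (by omega) (fun b hb => ?_) (fun c hc hcl => ?_)
    (fun a ha => ?_) (fun a ha hja => ?_) <;>
    simp only [setCell_apply, hir.ne, hj0, false_and, and_false, if_false]
  · have := hT.2.2.1 i b j hb.le hj
    omega
  · exact hright c hc hcl
  · have := hT.2.2.2 a i j ha hj
    omega
  · exact hbelow a ha hja

end IsSSYT

theorem entryCount_lt_succ {lam : ℕ → ℕ} {T : ℕ → ℕ → ℕ}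
    (hfin : {p : ℕ × ℕ | p.2 < lam p.1}.Finite) {m r c : ℕ}
    (hbelow : ∀ a b, b < lam a → T a b = m + 1 → b < lam (a + 1) ∧ T (a + 1) b = m + 2)
    (hc : c < lam r) (hrc : T r c = m + 2) (hnew : ∀ a, a + 1 = r → T a c ≠ m + 1) :
    entryCount lam T m < entryCount lam T (m + 1) := by
  let A := {p : ℕ × ℕ | p.2 < lam p.1 ∧ T p.1 p.2 = m + 1}
  let B := {p : ℕ × ℕ | p.2 < lam p.1 ∧ T p.1 p.2 = m + 1 + 1}
  let down : ℕ × ℕ → ℕ × ℕ := fun p => (p.1 + 1, p.2)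
  have hdown : down.Injective := fun p q h => by
    simp only [down, Prod.mk.injEq, Nat.add_right_cancel_iff] at h
    exact Prod.ext h.1 h.2
  have hsub : insert (r, c) (down '' A) ⊆ B := by
    rintro p (rfl | ⟨q, hq, rfl⟩)
    · exact ⟨hc, hrc⟩
    · exact hbelow q.1 q.2 hq.1 hq.2
  have hnot : (r, c) ∉ down '' A := by
    rintro ⟨q, hq, hqrc⟩
    simp only [down, Prod.mk.injEq] at hqrc
    exact hnew q.1 hqrc.1 (hqrc.2 ▸ hq.2)
  have hAfin : A.Finite := hfin.subset fun p hp => hp.1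
  calc entryCount lam T m = A.ncard := rfl
    _ < (insert (r, c) (down '' A)).ncard := by
      rw [Set.ncard_insert_of_notMem hnot (hAfin.image down),
        Set.ncard_image_of_injective A hdown]
      exact Nat.lt_succ_self _
    _ ≤ B.ncard := Set.ncard_le_ncard hsub (hfin.subset fun p hp => hp.1)
    _ = entryCount lam T (m + 1) := rfl

theorem first_entry_eq_of_kostka_eq_one {lam mu : ℕ → ℕ} {T : ℕ → ℕ → ℕ}
    (hlam : Antitone lam) (hmu : Antitone mu) (hfin : {p : ℕ × ℕ | p.2 < lam p.1}.Finite)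
    (hk : kostka lam mu = 1) (hT : IsSSYT lam T) (hW : HasWeight lam T mu) {r : ℕ}
    (hr : 0 < lam r) (hprev : ∀ a < r, T a 0 = a + 1) :
    T r 0 = r + 1 := by
  have hge := hT.add_one_le hlam hr
  by_contra hne
  obtain ⟨u, hu, hru⟩ : ∃ u, T r 0 = u + 2 ∧ r ≤ u := ⟨T r 0 - 2, by omega, by omega⟩
  have hrow : ∀ a b, b < lam a → T a b = u + 1 → a < r := fun a b hb hab =>
    hT.lt_of_lt_first hb (by omega)
  have hcol : ∀ a b, b < lam a → T a b = u + 1 → b ≠ 0 := by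
    rintro a b hb hab rfl
    have ha := hrow a 0 hb hab
    have := hprev a ha
    omega
  by_cases hfree :
      ∃ a b, b < lam a ∧ T a b = u + 1 ∧ ¬(b < lam (a + 1) ∧ T (a + 1) b = u + 1 + 1)
  · obtain ⟨i, j, hj, hij, hright, hbelow⟩ := hT.exists_raisable hlam hfin hfree
    have hir := hrow i j hj hij
    have hj0 := hcol i j hj hij
    have hT' := hT.setCell_exchange hr hu hj hij hir hj0 hright hbelow fun a ha => by
      have := hprev a ha
      omega
    have hW' := hW.setCell_swap hj hr
    rw [hij, hu] at hW'
    have := congrFun (congrFun (eq_of_kostka_eq_one hk hT hW hT' hW') r) 0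
    simp [setCell_apply, hir.ne'] at this
    omega
  · push Not at hfree
    have := entryCount_lt_succ hfin hfree hr hu fun a ha => by
      have := hprev a (by omega)
      omega
    rw [hW, hW] at this
    exact absurd (hmu u.le_succ) this.not_ge

theorem stmt6_general (h : ℕ) (lam mu : ℕ → ℕ)
    (hlp : IsPartition lam)
    (hmp : IsPartition mu)
    (hk : kostka lam mu = 1)
    (hlh : PartLength lam h) :
    ∀ T, IsSSYT lam T → HasWeight lam T mu → ∀ i, i < h → T i 0 = i + 1 := by
  intro T hT hW i
  induction i using Nat.strong_induction_on with
  | _ r ih =>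
    intro hr
    exact first_entry_eq_of_kostka_eq_one hlp.1 hmp.1 hlp.finite_cells hk hT hW (hlh.1 r hr)
      fun a ha => ih a ha (ha.trans hr)

theorem stmt6 (n h l : ℕ) (lam mu : ℕ → ℕ)
    (hlp : IsPartition lam) (hln : psize lam = n)
    (hmp : IsPartition mu) (hmn : psize mu = n)
    (hk : kostka lam mu = 1)
    (hlh : PartLength lam h) (hml : PartLength mu l) (hhl : h ≤ l) :
    ∀ T, IsSSYT lam T → HasWeight lam T mu → ∀ i, i < h → T i 0 = i + 1 :=
  stmt6_general h lam mu hlp hmp hk hlh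
end
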